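/- In the setting of the averaged back-propagator (f three times continuously differentiable with bounded derivatives; θ twice continuously differentiable with bounded second derivative; g continuously differentiable with g and ∇g bounded and Lipschitz; z the exact solution of z'(t) = f(z(t), θ(t)) with z(0) = x; p the exact adjoint solution of −p'(t)ᵀ = p(t)ᵀ ∂_z f(z(t), θ(t)) with p(1)ᵀ = (g(z(1)) − y)∇g(z(1))ᵀ; p̂ defined by p̂_{L−1}ᵀ = 2(g(z(1)) − y)∇g(z(1))ᵀ and p̂_{L−2}ᵀ = 2h p̂_{L−1}ᵀ ∂_z f(z(1−h), θ_{L−1})), define q̂_{L−1} = (1/4)p̂_{L−2} + (1/2)p̂_{L−1}. Then there exists a constant C, independent of L, such that for all L ≥ 4, |q̂_{L−1} − p(1 − h)| ≤ C h², where h = 1/L and θ_{L−1} = θ((L−1)h). -/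

import Mathlib

noncomputable section

/-- Jacobian of `f` with respect to its first (state) argument. -/
def jacZ {d n : ℕ}
    (f : EuclideanSpace ℝ (Fin d) × EuclideanSpace ℝ (Fin n) → EuclideanSpace ℝ (Fin d))
    (z : EuclideanSpace ℝ (Fin d)) (w : EuclideanSpace ℝ (Fin n)) :
    EuclideanSpace ℝ (Fin d) →L[ℝ] EuclideanSpace ℝ (Fin d) :=
  fderiv ℝ (fun v => f (v, w)) z

/-- Jacobian of `f` with respect to its second (parameter) argument. -/
def jacTh {d n : ℕ}
    (f : EuclideanSpace ℝ (Fin d) × EuclideanSpace ℝ (Fin n) → EuclideanSpace ℝ (Fin d))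
    (z : EuclideanSpace ℝ (Fin d)) (w : EuclideanSpace ℝ (Fin n)) :
    EuclideanSpace ℝ (Fin n) →L[ℝ] EuclideanSpace ℝ (Fin d) :=
  fderiv ℝ (fun v => f (z, v)) w

/-- Pair `(z_l, z_{l+1})` of Leapfrog states. -/
def leapPair {d n : ℕ}
    (f : EuclideanSpace ℝ (Fin d) × EuclideanSpace ℝ (Fin n) → EuclideanSpace ℝ (Fin d))
    (x : EuclideanSpace ℝ (Fin d)) (h : ℝ) (Θ : ℕ → EuclideanSpace ℝ (Fin n)) :
    ℕ → EuclideanSpace ℝ (Fin d) × EuclideanSpace ℝ (Fin d)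
  | 0 => (x, x + h • f (x, Θ 0))
  | l + 1 =>
      ((leapPair f x h Θ l).2,
        (leapPair f x h Θ l).1 + (2 * h) • f ((leapPair f x h Θ l).2, Θ (l + 1)))

/-- The Leapfrog state `z_l`. -/
def leap {d n : ℕ}
    (f : EuclideanSpace ℝ (Fin d) × EuclideanSpace ℝ (Fin n) → EuclideanSpace ℝ (Fin d))
    (x : EuclideanSpace ℝ (Fin d)) (h : ℝ) (Θ : ℕ → EuclideanSpace ℝ (Fin n)) (l : ℕ) :
    EuclideanSpace ℝ (Fin d) :=
  (leapPair f x h Θ l).1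

/-- Scalar coefficients of the block averaging matrix `T`. -/
def Tcoef (i j : ℕ) : ℝ :=
  if i = 0 then (if j = 0 then 1 else if j = 1 then 3 / 4 else if j = 3 then -(1 / 4) else 0)
  else if j = i then 1 / 2
  else if i = 1 ∧ j = 0 then 1 / 2
  else if j + 1 = i then 1 / 4
  else if j = i + 1 then 1 / 4
  else 0

/-!
With `M t = (∂_z f (z t, θ t))ᵀ`, the averaged value is `q̂_{L−1} = p 1 + h • M (1 - h) (p 1)`:
one step of the adjoint equation `p' = -M p` backwards from `t = 1`, with the coefficient frozen
at the left end point. Bounded first and second derivatives of `f` and the `C¹` curve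
`t ↦ (z t, θ t)` make `M` bounded and Lipschitz on `[0, 1]`, hence the right-hand side `M p` is
Lipschitz along the solution. The Taylor remainder of `p` on `[1 - h, 1]` and the error
`h (M (1 - h) - M 1) (p 1)` of freezing the coefficient are then both `O(h²)`.
-/

open Set ContinuousLinearMap
open scoped NNReal

theorem IsCompact.exists_nnnorm_le_of_continuousOn {α G : Type*} [TopologicalSpace α]
    [SeminormedAddCommGroup G] {s : Set α} {u : α → G} (hs : IsCompact s)
    (hu : ContinuousOn u s) : ∃ C : ℝ≥0, ∀ t ∈ s, ‖u t‖₊ ≤ C := by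
  obtain ⟨C, hC⟩ := (hs.image_of_continuousOn (continuous_nnnorm.comp_continuousOn hu)).bddAbove
  exact ⟨C, fun t ht => hC (mem_image_of_mem _ ht)⟩

section Calculus

variable {E F : Type*} [NormedAddCommGroup E] [NormedSpace ℝ E]
  [NormedAddCommGroup F] [NormedSpace ℝ F]

theorem norm_apply_sub_apply_le (A A' : E →L[ℝ] F) (u u' : E) :
    ‖A u - A' u'‖ ≤ ‖A - A'‖ * ‖u‖ + ‖A'‖ * ‖u - u'‖ :=
  calc ‖A u - A' u'‖ = ‖(A - A') u + A' (u - u')‖ := by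
        rw [sub_apply, map_sub, sub_add_sub_cancel]
    _ ≤ ‖A - A'‖ * ‖u‖ + ‖A'‖ * ‖u - u'‖ :=
        (norm_add_le _ _).trans (add_le_add (le_opNorm _ _) (le_opNorm _ _))

theorem norm_fderiv_sub_le_of_norm_iteratedFDeriv_two_le {f : E → F} {B : ℝ}
    (hf : ContDiff ℝ 2 f) (hB : ∀ x, ‖iteratedFDeriv ℝ 2 f x‖ ≤ B) (x y : E) :
    ‖fderiv ℝ f x - fderiv ℝ f y‖ ≤ B * ‖x - y‖ :=
  convex_univ.norm_image_sub_le_of_norm_fderiv_le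
    (fun u _ => ((hf.fderiv_right le_rfl).differentiable one_ne_zero).differentiableAt)
    (fun u _ => by rw [← norm_iteratedFDeriv_one, norm_iteratedFDeriv_fderiv]; exact hB u)
    (mem_univ y) (mem_univ x)

theorem norm_sub_sub_add_smul_le_of_norm_deriv_sub_le {u u' : ℝ → E} {a b C : ℝ} (hab : a ≤ b)
    (hu : ∀ t ∈ Icc a b, HasDerivWithinAt u (u' t) (Icc a b) t)
    (hC : ∀ t ∈ Icc a b, ‖u' t - u' b‖ ≤ C) :
    ‖u a - u b + (b - a) • u' b‖ ≤ C * (b - a) := by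
  have hv : ∀ t ∈ Icc a b,
      HasDerivWithinAt (fun s => u s - s • u' b) (u' t - u' b) (Icc a b) t := fun t ht =>
    (hu t ht).sub (by simpa using (hasDerivWithinAt_id t _).smul_const (u' b))
  calc ‖u a - u b + (b - a) • u' b‖ = ‖(u a - a • u' b) - (u b - b • u' b)‖ := by
        congr 1; module
    _ ≤ C * ‖a - b‖ := (convex_Icc a b).norm_image_sub_le_of_norm_hasDerivWithin_le hv hC
        (right_mem_Icc.2 hab) (left_mem_Icc.2 hab)
    _ = C * (b - a) := by rw [Real.norm_eq_abs, abs_sub_comm, abs_of_nonneg (sub_nonneg.2 hab)]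

theorem exists_lipschitzOnWith_of_hasDerivWithinAt {u u' : ℝ → E} {a b : ℝ}
    (hu : ∀ t ∈ Icc a b, HasDerivWithinAt u (u' t) (Icc a b) t)
    (hu' : ContinuousOn u' (Icc a b)) :
    ∃ K, LipschitzOnWith K u (Icc a b) := by
  obtain ⟨K, hK⟩ := isCompact_Icc.exists_nnnorm_le_of_continuousOn hu'
  exact ⟨K, (convex_Icc a b).lipschitzOnWith_of_nnnorm_hasDerivWithin_le hu hK⟩

theorem LipschitzOnWith.clm_apply {α : Type*} [PseudoMetricSpace α] {s : Set α}
    {M : α → E →L[ℝ] F} {p : α → E} {KM Kp B P : ℝ≥0}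
    (hM : LipschitzOnWith KM M s) (hp : LipschitzOnWith Kp p s)
    (hMB : ∀ t ∈ s, ‖M t‖₊ ≤ B) (hpP : ∀ t ∈ s, ‖p t‖₊ ≤ P) :
    LipschitzOnWith (KM * P + B * Kp) (fun t => M t (p t)) s := by
  refine LipschitzOnWith.of_dist_le_mul fun t ht r hr => ?_
  have hMtr := hM.dist_le_mul t ht r hr
  have hptr := hp.dist_le_mul t ht r hr
  rw [dist_eq_norm] at hMtr hptr ⊢
  calc ‖M t (p t) - M r (p r)‖ ≤ ‖M t - M r‖ * ‖p t‖ + ‖M r‖ * ‖p t - p r‖ :=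
        norm_apply_sub_apply_le _ _ _ _
    _ ≤ KM * dist t r * P + B * (Kp * dist t r) := by
        gcongr
        exacts [hpP t ht, hMB r hr]
    _ = ↑(KM * P + B * Kp) * dist t r := by push_cast; ring

theorem exists_lipschitzOnWith_linear_ode_rhs {M : ℝ → E →L[ℝ] E} {p : ℝ → E} {a b : ℝ}
    {KM B : ℝ≥0} (hM : LipschitzOnWith KM M (Icc a b)) (hMB : ∀ t ∈ Icc a b, ‖M t‖₊ ≤ B)
    (hp : ∀ t ∈ Icc a b, HasDerivWithinAt p (-M t (p t)) (Icc a b) t) :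
    ∃ K, LipschitzOnWith K (fun t => M t (p t)) (Icc a b) := by
  obtain ⟨P, hP⟩ :=
    isCompact_Icc.exists_nnnorm_le_of_continuousOn fun t ht => (hp t ht).continuousWithinAt
  have hp_lip : LipschitzOnWith (B * P) p (Icc a b) :=
    (convex_Icc a b).lipschitzOnWith_of_nnnorm_hasDerivWithin_le hp fun t ht => by
      rw [nnnorm_neg]
      exact (le_opNNNorm _ _).trans (mul_le_mul' (hMB t ht) (hP t ht))
  exact ⟨_, hM.clm_apply hp_lip hMB hP⟩

theorem norm_add_smul_apply_sub_le_of_linear_ode {M : ℝ → E →L[ℝ] E} {p : ℝ → E} {a b : ℝ}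
    {K KM : ℝ≥0} (hab : a ≤ b) (hM : LipschitzOnWith KM M (Icc a b))
    (hMp : LipschitzOnWith K (fun t => M t (p t)) (Icc a b))
    (hp : ∀ t ∈ Icc a b, HasDerivWithinAt p (-M t (p t)) (Icc a b) t) :
    ‖p b + (b - a) • M a (p b) - p a‖ ≤ (K + KM * ‖p b‖) * (b - a) ^ 2 := by
  have ha : a ∈ Icc a b := left_mem_Icc.2 hab
  have hb : b ∈ Icc a b := right_mem_Icc.2 hab
  have hdist : ∀ t ∈ Icc a b, dist b t ≤ b - a := fun t ht => by
    rw [Real.dist_eq, abs_of_nonneg (sub_nonneg.2 ht.2)]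
    linarith [ht.1]
  have htaylor : ‖p a - p b + (b - a) • -M b (p b)‖ ≤ K * (b - a) * (b - a) :=
    norm_sub_sub_add_smul_le_of_norm_deriv_sub_le hab hp fun t ht => by
      rw [neg_sub_neg, ← dist_eq_norm]
      exact (hMp.dist_le_mul b hb t ht).trans (by gcongr; exact hdist t ht)
  have hfrozen : ‖(M a - M b) (p b)‖ ≤ KM * (b - a) * ‖p b‖ := by
    refine (le_opNorm _ _).trans (mul_le_mul_of_nonneg_right ?_ (norm_nonneg _))
    rw [← dist_eq_norm, dist_comm]
    exact (hM.dist_le_mul b hb a ha).trans (by gcongr; exact hdist a ha)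
  calc ‖p b + (b - a) • M a (p b) - p a‖
        = ‖(b - a) • (M a - M b) (p b) - (p a - p b + (b - a) • -M b (p b))‖ := by
        rw [sub_apply]; congr 1; module
    _ ≤ (b - a) * ‖(M a - M b) (p b)‖ + ‖p a - p b + (b - a) • -M b (p b)‖ := by
        refine (norm_sub_le _ _).trans_eq ?_
        rw [norm_smul, Real.norm_of_nonneg (sub_nonneg.2 hab)]
    _ ≤ (b - a) * (KM * (b - a) * ‖p b‖) + K * (b - a) * (b - a) := by gcongr
    _ = (K + KM * ‖p b‖) * (b - a) ^ 2 := by ring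

end Calculus

section Jacobian

variable {d n : ℕ}
  {f : EuclideanSpace ℝ (Fin d) × EuclideanSpace ℝ (Fin n) → EuclideanSpace ℝ (Fin d)}

theorem jacZ_eq_fderiv_comp_inl {z : EuclideanSpace ℝ (Fin d)} {w : EuclideanSpace ℝ (Fin n)}
    (hf : DifferentiableAt ℝ f (z, w)) : jacZ f z w = (fderiv ℝ f (z, w)).comp (inl ℝ _ _) :=
  (hf.hasFDerivAt.comp z (hasFDerivAt_prodMk_left z w)).fderiv

theorem norm_jacZ_le {z : EuclideanSpace ℝ (Fin d)} {w : EuclideanSpace ℝ (Fin n)}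
    (hf : DifferentiableAt ℝ f (z, w)) : ‖jacZ f z w‖ ≤ ‖fderiv ℝ f (z, w)‖ := by
  rw [jacZ_eq_fderiv_comp_inl hf]
  exact (opNorm_comp_le _ _).trans
    (mul_le_of_le_one_right (norm_nonneg _) (norm_inl_le_one ℝ _ _))

theorem nnnorm_adjoint_jacZ_le {B : ℝ} (hf : Differentiable ℝ f)
    (hB : ∀ u, ‖iteratedFDeriv ℝ 1 f u‖ ≤ B) (z : EuclideanSpace ℝ (Fin d))
    (w : EuclideanSpace ℝ (Fin n)) : ‖adjoint (jacZ f z w)‖₊ ≤ B.toNNReal := by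
  rw [← NNReal.coe_le_coe, coe_nnnorm, LinearIsometryEquiv.norm_map]
  refine (norm_jacZ_le (hf _)).trans ?_
  rw [← norm_iteratedFDeriv_one]
  exact (hB _).trans (Real.le_coe_toNNReal B)

theorem norm_jacZ_sub_jacZ_le (hf : Differentiable ℝ f) (z z' : EuclideanSpace ℝ (Fin d))
    (w w' : EuclideanSpace ℝ (Fin n)) :
    ‖jacZ f z w - jacZ f z' w'‖ ≤ ‖fderiv ℝ f (z, w) - fderiv ℝ f (z', w')‖ := by
  rw [jacZ_eq_fderiv_comp_inl (hf _), jacZ_eq_fderiv_comp_inl (hf _), ← sub_comp]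
  exact (opNorm_comp_le _ _).trans
    (mul_le_of_le_one_right (norm_nonneg _) (norm_inl_le_one ℝ _ _))

theorem lipschitzWith_jacZ_of_norm_iteratedFDeriv_two_le {B : ℝ} (hf : ContDiff ℝ 2 f)
    (hB : ∀ u, ‖iteratedFDeriv ℝ 2 f u‖ ≤ B) :
    LipschitzWith B.toNNReal (Function.uncurry (jacZ f)) :=
  LipschitzWith.of_dist_le' fun u v => by
    simp only [dist_eq_norm]
    exact (norm_jacZ_sub_jacZ_le (hf.differentiable two_ne_zero) _ _ _ _).trans
      (norm_fderiv_sub_le_of_norm_iteratedFDeriv_two_le hf hB u v)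

theorem exists_lipschitzOnWith_adjoint_jacZ {θ : ℝ → EuclideanSpace ℝ (Fin n)}
    {z : ℝ → EuclideanSpace ℝ (Fin d)} {a b B : ℝ} (hf : ContDiff ℝ 2 f)
    (hB : ∀ u, ‖iteratedFDeriv ℝ 2 f u‖ ≤ B) (hθ : ContDiff ℝ 1 θ)
    (hz : ∀ t ∈ Icc a b, HasDerivAt z (f (z t, θ t)) t) :
    ∃ K, LipschitzOnWith K (fun t => adjoint (jacZ f (z t) (θ t))) (Icc a b) := by
  have hzc : ContinuousOn z (Icc a b) := fun t ht => (hz t ht).continuousAt.continuousWithinAt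
  obtain ⟨K, hK⟩ := exists_lipschitzOnWith_of_hasDerivWithinAt
    (u := fun t => (z t, θ t)) (u' := fun t => (f (z t, θ t), deriv θ t))
    (fun t ht => ((hz t ht).prodMk (hθ.differentiable one_ne_zero t).hasDerivAt).hasDerivWithinAt)
    ((hf.continuous.comp_continuousOn (hzc.prodMk hθ.continuous.continuousOn)).prodMk
      (hθ.continuous_deriv le_rfl).continuousOn)
  have hJ := lipschitzWith_jacZ_of_norm_iteratedFDeriv_two_le hf hB
  have hA := (adjoint (𝕜 := ℝ) (E := EuclideanSpace ℝ (Fin d))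
    (F := EuclideanSpace ℝ (Fin d))).lipschitz
  have hAJ := (hA.comp hJ).comp_lipschitzOnWith hK
  exact ⟨_, hAJ⟩

end Jacobian

theorem averaged_backpropagator_final_layer_general {d n : ℕ}
    (f : EuclideanSpace ℝ (Fin d) × EuclideanSpace ℝ (Fin n) → EuclideanSpace ℝ (Fin d))
    (g : EuclideanSpace ℝ (Fin d) → ℝ)
    (θ : ℝ → EuclideanSpace ℝ (Fin n))
    (y : ℝ)
    (z p : ℝ → EuclideanSpace ℝ (Fin d))
    (hf : ContDiff ℝ 3 f)
    (hfb : ∃ B : ℝ, ∀ i : ℕ, 1 ≤ i → i ≤ 3 → ∀ w, ‖iteratedFDeriv ℝ i f w‖ ≤ B)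
    (hθ : ContDiff ℝ 2 θ)
    (hz : ∀ t ∈ Set.Icc (0 : ℝ) 1, HasDerivAt z (f (z t, θ t)) t)
    (hp : ∀ t ∈ Set.Icc (0 : ℝ) 1, HasDerivAt p
      (-(ContinuousLinearMap.adjoint (jacZ f (z t) (θ t))) (p t)) t)
    (hp1 : p 1 = (g (z 1) - y) • gradient g (z 1)) :
    ∃ C : ℝ, ∀ L : ℕ, 4 ≤ L → ∀ h : ℝ, h = 1 / (L : ℝ) →
      ∀ phatL1 phatL2 qhatL1 : EuclideanSpace ℝ (Fin d),
      phatL1 = (2 * (g (z 1) - y)) • gradient g (z 1) →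
      phatL2 = (2 * h) • (ContinuousLinearMap.adjoint
        (jacZ f (z (1 - h)) (θ (((L : ℝ) - 1) * h)))) phatL1 →
      qhatL1 = (1 / 4 : ℝ) • phatL2 + (1 / 2 : ℝ) • phatL1 →
      ‖qhatL1 - p (1 - h)‖ ≤ C * h ^ 2 := by
  obtain ⟨B, hB⟩ := hfb
  set M : ℝ → _ := fun t => adjoint (jacZ f (z t) (θ t))
  have hMB : ∀ t ∈ Icc (0 : ℝ) 1, ‖M t‖₊ ≤ B.toNNReal := fun t _ =>
    nnnorm_adjoint_jacZ_le (hf.differentiable (by norm_num)) (hB 1 le_rfl (by norm_num)) _ _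
  obtain ⟨KM, hKM⟩ := exists_lipschitzOnWith_adjoint_jacZ (hf.of_le (by norm_num))
    (hB 2 (by norm_num) (by norm_num)) (hθ.of_le (by norm_num)) hz
  obtain ⟨K, hK⟩ := exists_lipschitzOnWith_linear_ode_rhs hKM hMB
    fun t ht => (hp t ht).hasDerivWithinAt
  refine ⟨K + KM * ‖p 1‖, fun L hL h hh _ _ q hpL1 hpL2 hq => ?_⟩
  have hL0 : (0 : ℝ) < L := by positivity
  have hh0 : 0 < h := hh ▸ by positivity
  have hh1 : h ≤ 1 := hh ▸ div_le_one_of_le₀ (by exact_mod_cast (by omega : 1 ≤ L)) hL0.le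
  have hθarg : ((L : ℝ) - 1) * h = 1 - h := by rw [hh]; field_simp
  have h2p : (2 * (g (z 1) - y)) • gradient g (z 1) = (2 : ℝ) • p 1 := by rw [mul_smul, hp1]
  have hq' : q = p 1 + h • M (1 - h) (p 1) := by
    rw [hq, hpL2, hθarg, hpL1, h2p, map_smul]
    module
  have hsub : Icc (1 - h) 1 ⊆ Icc (0 : ℝ) 1 := Icc_subset_Icc (by linarith) le_rfl
  simpa [hq'] using norm_add_smul_apply_sub_le_of_linear_ode (by linarith : 1 - h ≤ 1)
    (hKM.mono hsub) (hK.mono hsub) fun t ht => (hp t (hsub ht)).hasDerivWithinAt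

/-- Final-layer step of the averaging argument: the weighted combination
`q̂_{L−1} = ¼ p̂_{L−2} + ½ p̂_{L−1}` matches the exact adjoint value `p(1 − h)` to order `h²`. -/
theorem averaged_backpropagator_final_layer {d n : ℕ}
    (f : EuclideanSpace ℝ (Fin d) × EuclideanSpace ℝ (Fin n) → EuclideanSpace ℝ (Fin d))
    (g : EuclideanSpace ℝ (Fin d) → ℝ)
    (θ : ℝ → EuclideanSpace ℝ (Fin n))
    (x : EuclideanSpace ℝ (Fin d)) (y : ℝ)
    (z p : ℝ → EuclideanSpace ℝ (Fin d))
    (hf : ContDiff ℝ 3 f)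
    (hfb : ∃ B : ℝ, ∀ i : ℕ, 1 ≤ i → i ≤ 3 → ∀ w, ‖iteratedFDeriv ℝ i f w‖ ≤ B)
    (hg : ContDiff ℝ 1 g)
    (hgb : ∃ B : ℝ, ∀ w, |g w| ≤ B ∧ ‖gradient g w‖ ≤ B)
    (hgl : ∃ K : NNReal, LipschitzWith K g ∧ LipschitzWith K (gradient g))
    (hθ : ContDiff ℝ 2 θ)
    (hθb : ∃ B : ℝ, ∀ t, ‖iteratedFDeriv ℝ 2 θ t‖ ≤ B)
    (hz0 : z 0 = x)
    (hz : ∀ t ∈ Set.Icc (0 : ℝ) 1, HasDerivAt z (f (z t, θ t)) t)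
    (hp : ∀ t ∈ Set.Icc (0 : ℝ) 1, HasDerivAt p
      (-(ContinuousLinearMap.adjoint (jacZ f (z t) (θ t))) (p t)) t)
    (hp1 : p 1 = (g (z 1) - y) • gradient g (z 1)) :
    ∃ C : ℝ, ∀ L : ℕ, 4 ≤ L → ∀ h : ℝ, h = 1 / (L : ℝ) →
      ∀ phatL1 phatL2 qhatL1 : EuclideanSpace ℝ (Fin d),
      phatL1 = (2 * (g (z 1) - y)) • gradient g (z 1) →
      phatL2 = (2 * h) • (ContinuousLinearMap.adjoint
        (jacZ f (z (1 - h)) (θ (((L : ℝ) - 1) * h)))) phatL1 →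
      qhatL1 = (1 / 4 : ℝ) • phatL2 + (1 / 2 : ℝ) • phatL1 →
      ‖qhatL1 - p (1 - h)‖ ≤ C * h ^ 2 :=
  averaged_backpropagator_final_layer_general f g θ y z p hf hfb hθ hz hp hp1
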